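/- The averaged composition on partition classes is associative: for λ ∈ Part(m,n), μ ∈ Part(l,m) and ν ∈ Part(k,l), one has (δ_λ * δ_μ) * δ_ν = δ_λ * (δ_μ * δ_ν) in K[Part(k,n)]. -/

import Mathlib

open Finset

/-- The multiset of fiber cardinalities of a map `f : Fin a → Fin b`. -/
def proj {a b : ℕ} (f : Fin a → Fin b) : Multiset ℕ :=
  Multiset.map (fun i : Fin b => (Finset.univ.filter fun j => f j = i).card)
    (Finset.univ : Finset (Fin b)).val

/-- The composite `δ_{proj f} * δ_{proj g} = (1/m!) Σ_{σ ∈ S_m} δ_{proj (f∘σ∘g)}`,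
for representatives `f : Fin m → Fin n` and `g : Fin l → Fin m`, with values in the
free `K`-vector space on multisets of natural numbers (in which the free vector
space `K[Part(l,n)]` on partitions embeds). -/
noncomputable def starElt (K : Type) [Field K] {l m n : ℕ}
    (f : Fin m → Fin n) (g : Fin l → Fin m) : Multiset ℕ →₀ K :=
  (m.factorial : K)⁻¹ •
    ∑ σ : Equiv.Perm (Fin m), Finsupp.single (proj (f ∘ ⇑σ ∘ g)) (1 : K)

/-- `δ_λ * δ_μ`, defined via a choice of representatives (independent of the choice). -/
noncomputable def starOf (K : Type) [Field K] (m n l : ℕ) (lam mu : Multiset ℕ) :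
    Multiset ℕ →₀ K :=
  if h : (∃ f : Fin m → Fin n, Function.Surjective f ∧ proj f = lam) ∧
      (∃ g : Fin l → Fin m, Function.Surjective g ∧ proj g = mu) then
    starElt K h.1.choose h.2.choose
  else 0

/-- The composition `* : K[Part(m,n)] × K[Part(l,m)] → K[Part(l,n)]`, as the bilinear
extension of `δ_λ * δ_μ = (1/m!) Σ_{σ ∈ S_m} δ_{proj (f∘σ∘g)}` (representatives
`proj f = λ`, `proj g = μ`). -/
noncomputable def starComp (K : Type) [Field K] (m n l : ℕ)
    (x y : Multiset ℕ →₀ K) : Multiset ℕ →₀ K :=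
  ∑ a ∈ x.support, ∑ b ∈ y.support, (x a * y b) • starOf K m n l a b

/-- The set of order-preserving surjections `Fin m → Fin n`. -/
noncomputable def OSurj (m n : ℕ) : Finset (Fin m → Fin n) :=
  open scoped Classical in
  Finset.univ.filter fun s => Monotone s ∧ Function.Surjective s

/-- `Q_{m,n}`, the uniform average of the `δ_{proj s}` over order-preserving
surjections `s : Fin m → Fin n`. -/
noncomputable def Q (K : Type) [Field K] (m n : ℕ) : Multiset ℕ →₀ K :=
  ((OSurj m n).card : K)⁻¹ • ∑ s ∈ OSurj m n, Finsupp.single (proj s) (1 : K)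

/-- `Ppart K n k = P_{n+k,n}` where `P_{n,n} = δ_{(1^n)}`,
`P_{m+1,n} = P_{m,n} * δ_{(2,1^{m-1})}` (so `P_{m,n} = P_{n+1,n} * … * P_{m,m−1}`). -/
noncomputable def Ppart (K : Type) [Field K] (n : ℕ) : ℕ → (Multiset ℕ →₀ K)
  | 0 => Finsupp.single (Multiset.replicate n 1) 1
  | k + 1 => starComp K (n + k) n (n + k + 1) (Ppart K n k)
      (Finsupp.single (2 ::ₘ Multiset.replicate (n + k - 1) 1) 1)

/-- The monoidal product `⊙ : K[Part(m,n)] × K[Part(m',n')] → K[Part(m+m',n+n')]`,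
bilinear extension of `δ_λ ⊙ δ_μ = (−1)^{(m−n)n'} Q_{m+m',n+n'}`. -/
noncomputable def odot (K : Type) [Field K] (m n m' n' : ℕ)
    (x y : Multiset ℕ →₀ K) : Multiset ℕ →₀ K :=
  ∑ a ∈ x.support, ∑ b ∈ y.support,
    (x a * y b) • ((-1 : K) ^ ((m - n) * n') • Q K (m + m') (n + n'))

/-! Both sides are the average of `δ_{proj (f ∘ σ ∘ g ∘ τ ∘ h)}` over `(σ, τ) ∈ S_m × S_l`.
The only input beyond bilinearity is that `f ↦ proj f` is a complete invariant for the action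
of `S_n × S_m` on maps `Fin m → Fin n`, so that `starElt` is well defined on partition classes. -/

theorem exists_perm_comp_eq_of_card_fiber_eq {α γ : Type*} [Fintype α] [DecidableEq γ]
    (c c' : α → γ) (h : ∀ v, Fintype.card {a // c' a = v} = Fintype.card {a // c a = v}) :
    ∃ e : Equiv.Perm α, ∀ a, c (e a) = c' a :=
  ⟨Equiv.ofFiberEquiv fun v => Fintype.equivOfCardEq (h v), Equiv.ofFiberEquiv_map _⟩

theorem exists_perm_comp_eq_of_map_univ_eq {α γ : Type*} [Fintype α] [DecidableEq γ]
    {c c' : α → γ} (h : (univ : Finset α).val.map c = (univ : Finset α).val.map c') :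
    ∃ e : Equiv.Perm α, ∀ a, c (e a) = c' a := by
  have hcount : ∀ (d : α → γ) v,
      Fintype.card {a // d a = v} = ((univ : Finset α).val.map d).count v := by
    intro d v
    rw [Multiset.count_map, Fintype.card_subtype, Finset.card_def, Finset.filter_val]
    simp only [eq_comm]
  exact exists_perm_comp_eq_of_card_fiber_eq c c' fun v => by rw [hcount, hcount, h]

theorem exists_perm_of_proj_eq {a b : ℕ} {f f' : Fin a → Fin b} (hp : proj f = proj f') :
    ∃ (π : Equiv.Perm (Fin b)) (β : Equiv.Perm (Fin a)), ∀ j, π (f (β j)) = f' j := by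
  obtain ⟨π, hπ⟩ := exists_perm_comp_eq_of_map_univ_eq hp
  obtain ⟨β, hβ⟩ := exists_perm_comp_eq_of_card_fiber_eq (π.symm ∘ f) f' fun v => by
    simp only [Function.comp_apply, Equiv.symm_apply_eq, Fintype.card_subtype, hπ]
  exact ⟨π.symm, β, hβ⟩

theorem proj_comp_perm {a b : ℕ} (u : Fin a → Fin b) (δ : Equiv.Perm (Fin a)) :
    proj (u ∘ δ) = proj u := by
  refine Multiset.map_congr rfl fun i _ => Finset.card_equiv δ fun j => ?_
  simp

theorem proj_perm_comp {a b : ℕ} (π : Equiv.Perm (Fin b)) (u : Fin a → Fin b) :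
    proj (π ∘ u) = proj u := by
  conv_lhs => rw [proj, ← Multiset.map_univ_val_equiv π, Multiset.map_map]
  refine Multiset.map_congr rfl fun i _ => ?_
  simp [π.injective.eq_iff]

theorem starElt_congr_proj (K : Type) [Field K] {l m n : ℕ} {f f' : Fin m → Fin n}
    {g g' : Fin l → Fin m} (hf : proj f = proj f') (hg : proj g = proj g') :
    starElt K f g = starElt K f' g' := by
  obtain ⟨π, β, hβ⟩ := exists_perm_of_proj_eq hf
  obtain ⟨γ, δ, hδ⟩ := exists_perm_of_proj_eq hg
  have hproj : ∀ σ : Equiv.Perm (Fin m), proj (f' ∘ σ ∘ g') = proj (f ∘ ⇑(β * σ * γ) ∘ g) := by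
    intro σ
    have hcomp : f' ∘ σ ∘ g' = π ∘ (f ∘ ⇑(β * σ * γ) ∘ g) ∘ δ := by
      funext j
      simp only [Function.comp_apply, Equiv.Perm.mul_apply, ← hβ, ← hδ]
    rw [hcomp, proj_perm_comp, proj_comp_perm]
  unfold starElt
  rw [← Equiv.sum_comp ((Equiv.mulLeft β).trans (Equiv.mulRight γ))]
  simp only [hproj]
  rfl

theorem starOf_proj (K : Type) [Field K] {l m n : ℕ} {f : Fin m → Fin n}
    (hf : Function.Surjective f) {g : Fin l → Fin m} (hg : Function.Surjective g) :
    starOf K m n l (proj f) (proj g) = starElt K f g := by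
  have hrep : (∃ f₀ : Fin m → Fin n, Function.Surjective f₀ ∧ proj f₀ = proj f) ∧
      (∃ g₀ : Fin l → Fin m, Function.Surjective g₀ ∧ proj g₀ = proj g) :=
    ⟨⟨f, hf, rfl⟩, ⟨g, hg, rfl⟩⟩
  rw [starOf, dif_pos hrep]
  exact starElt_congr_proj K hrep.1.choose_spec.2 hrep.2.choose_spec.2

section starComp

variable (K : Type) [Field K] (m n l : ℕ)

theorem starComp_single_left (a : Multiset ℕ) (y : Multiset ℕ →₀ K) :
    starComp K m n l (Finsupp.single a 1) y =
      Finsupp.linearCombination K (starOf K m n l a) y := by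
  rw [starComp, Finsupp.support_single a one_ne_zero, Finset.sum_singleton,
    Finsupp.linearCombination_apply, Finsupp.sum]
  simp only [Finsupp.single_eq_same, one_mul]

theorem starComp_single_right (x : Multiset ℕ →₀ K) (b : Multiset ℕ) :
    starComp K m n l x (Finsupp.single b 1) =
      Finsupp.linearCombination K (fun a => starOf K m n l a b) x := by
  simp only [starComp, Finsupp.support_single b one_ne_zero, Finset.sum_singleton,
    Finsupp.single_eq_same, mul_one, Finsupp.linearCombination_apply, Finsupp.sum]

theorem starComp_single_single (a b : Multiset ℕ) :
    starComp K m n l (Finsupp.single a 1) (Finsupp.single b 1) = starOf K m n l a b := by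
  rw [starComp_single_left, Finsupp.linearCombination_single, one_smul]

end starComp

theorem starComp_starElt_single (K : Type) [Field K] {k l m n : ℕ} {f : Fin m → Fin n}
    (hf : Function.Surjective f) {g : Fin l → Fin m} (hg : Function.Surjective g)
    {h : Fin k → Fin l} (hh : Function.Surjective h) :
    starComp K l n k (starElt K f g) (Finsupp.single (proj h) 1) =
      (m.factorial : K)⁻¹ • ∑ σ : Equiv.Perm (Fin m), starElt K (f ∘ σ ∘ g) h := by
  rw [starComp_single_right, starElt, map_smul, map_sum]
  congr 1
  refine Finset.sum_congr rfl fun σ _ => ?_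
  rw [Finsupp.linearCombination_single, one_smul,
    starOf_proj K (hf.comp (σ.surjective.comp hg)) hh]

theorem starComp_single_starElt (K : Type) [Field K] {k l m n : ℕ} {f : Fin m → Fin n}
    (hf : Function.Surjective f) {g : Fin l → Fin m} (hg : Function.Surjective g)
    {h : Fin k → Fin l} (hh : Function.Surjective h) :
    starComp K m n k (Finsupp.single (proj f) 1) (starElt K g h) =
      (l.factorial : K)⁻¹ • ∑ τ : Equiv.Perm (Fin l), starElt K f (g ∘ τ ∘ h) := by
  rw [starComp_single_left, starElt, map_smul, map_sum]
  congr 1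
  refine Finset.sum_congr rfl fun τ _ => ?_
  rw [Finsupp.linearCombination_single, one_smul,
    starOf_proj K hf (hg.comp (τ.surjective.comp hh))]

theorem stmt11_general (K : Type) [Field K] {k l m n : ℕ}
    (f : Fin m → Fin n) (hf : Function.Surjective f)
    (g : Fin l → Fin m) (hg : Function.Surjective g)
    (h : Fin k → Fin l) (hh : Function.Surjective h) :
    starComp K l n k
        (starComp K m n l (Finsupp.single (proj f) 1) (Finsupp.single (proj g) 1))
        (Finsupp.single (proj h) 1) =
      starComp K m n k (Finsupp.single (proj f) 1)
        (starComp K l m k (Finsupp.single (proj g) 1) (Finsupp.single (proj h) 1)) := by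
  rw [starComp_single_single, starComp_single_single, starOf_proj K hf hg, starOf_proj K hg hh,
    starComp_starElt_single K hf hg hh, starComp_single_starElt K hf hg hh]
  simp only [starElt, Finset.smul_sum, smul_smul]
  rw [Finset.sum_comm]
  refine Finset.sum_congr rfl fun τ _ => Finset.sum_congr rfl fun σ _ => ?_
  rw [mul_comm]
  rfl

/-- the averaged composition on partition classes is associative:
for `λ ∈ Part(m,n)`, `μ ∈ Part(l,m)`, `ν ∈ Part(k,l)` (given by representatives
`f`, `g`, `h`), one has `(δ_λ * δ_μ) * δ_ν = δ_λ * (δ_μ * δ_ν)` in `K[Part(k,n)]`. -/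
theorem stmt11 (K : Type) [Field K] [CharZero K] {k l m n : ℕ}
    (f : Fin m → Fin n) (hf : Function.Surjective f)
    (g : Fin l → Fin m) (hg : Function.Surjective g)
    (h : Fin k → Fin l) (hh : Function.Surjective h) :
    starComp K l n k
        (starComp K m n l (Finsupp.single (proj f) 1) (Finsupp.single (proj g) 1))
        (Finsupp.single (proj h) 1) =
      starComp K m n k (Finsupp.single (proj f) 1)
        (starComp K l m k (Finsupp.single (proj g) 1) (Finsupp.single (proj h) 1)) :=
  stmt11_general K f hf g hg h hh
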